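/- arXiv:2210.01598 — 2 statements merged into one kernel-verified Lean document; each statement's English description precedes it below -/
import Mathlib

section
/- Let D be an oriented graph and let P = (u, w_1, …, w_q, v) with q ≥ 1 be a directed (u,v)-path in D that is not a shortest directed (u,v)-path, such that every internal vertex w_i (1 ≤ i ≤ q) has in-degree 1 and out-degree 1 in D. Then every hull set of D in the geodetic convexity contains at least one internal vertex of P; in particular, the set W = {w_1, …, w_q} is coconvex (its complement is convex) in the geodetic convexity. -/
/-! Basic machinery for convexity on oriented graphs. -/

/-- A directed walk along the arc relation `A` from `u` to `v`,
recorded as the (nonempty) list of its vertices. Its length is `l.length - 1`. -/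
def DiWalk {V : Type*} (A : V → V → Prop) (u v : V) (l : List V) : Prop :=
  l.head? = some u ∧ l.getLast? = some v ∧ l.Chain' A

/-- A shortest directed walk (geodesic) from `u` to `v`:
a directed walk of minimum length among all directed `(u,v)`-walks. -/
def IsGeodesic {V : Type*} (A : V → V → Prop) (u v : V) (l : List V) : Prop :=
  DiWalk A u v l ∧ ∀ l', DiWalk A u v l' → l.length ≤ l'.length

/-- Geodetic interval: `u`, `v`, and all vertices lying on a shortest directed
`(u,v)`-path or on a shortest directed `(v,u)`-path. -/
def geoInterval {V : Type*} (A : V → V → Prop) (u v : V) : Set V :=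
  {u, v} ∪ {w | (∃ l, IsGeodesic A u v l ∧ w ∈ l) ∨ (∃ l, IsGeodesic A v u l ∧ w ∈ l)}

/-- P3 interval: `u`, `v`, and all vertices lying on a directed `(u,v)`- or
`(v,u)`-path of length two. -/
def p3Interval {V : Type*} (A : V → V → Prop) (u v : V) : Set V :=
  {u, v} ∪ {w | (A u w ∧ A w v) ∨ (A v w ∧ A w u)}

/-- P3* interval: `u`, `v`, and all vertices lying on a shortest directed `(u,v)`- or
`(v,u)`-path of length two (i.e. the corresponding endpoints are not adjacent). -/
def p3sInterval {V : Type*} (A : V → V → Prop) (u v : V) : Set V :=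
  {u, v} ∪ {w | (A u w ∧ A w v ∧ ¬ A u v) ∨ (A v w ∧ A w u ∧ ¬ A v u)}

/-- A set is convex for the interval function `I` if it is closed under `I`. -/
def IsConvexSet {V : Type*} (I : V → V → Set V) (C : Set V) : Prop :=
  ∀ u ∈ C, ∀ v ∈ C, I u v ⊆ C

/-- The convex hull of `S`: the smallest convex set containing `S`. -/
def convexHullD {V : Type*} (I : V → V → Set V) (S : Set V) : Set V :=
  ⋂₀ {C | IsConvexSet I C ∧ S ⊆ C}

/-- `S` is an interval set if applying `I` to pairs of `S` covers all vertices. -/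
def IsIntervalSet {V : Type*} (I : V → V → Set V) (S : Set V) : Prop :=
  (⋃ u ∈ S, ⋃ v ∈ S, I u v) = Set.univ

/-- `S` is a hull set if its convex hull is the whole vertex set. -/
def IsHullSet {V : Type*} (I : V → V → Set V) (S : Set V) : Prop :=
  convexHullD I S = Set.univ

/-- The interval number: minimum cardinality of an interval set. -/
noncomputable def intervalNumber {V : Type*} (I : V → V → Set V) : ℕ :=
  sInf {k | ∃ S : Set V, IsIntervalSet I S ∧ S.ncard = k}

/-- The hull number: minimum cardinality of a hull set. -/
noncomputable def hullNumber {V : Type*} (I : V → V → Set V) : ℕ :=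
  sInf {k | ∃ S : Set V, IsHullSet I S ∧ S.ncard = k}

/-- `v` is reachable from `u` by a directed walk. -/
def Reach {V : Type*} (A : V → V → Prop) (u v : V) : Prop :=
  ∃ l, DiWalk A u v l

/-- An oriented graph: no loops and at most one arc between any two vertices. -/
def IsOriented {V : Type*} (A : V → V → Prop) : Prop :=
  ∀ u v, A u v → ¬ A v u

/-- Strong connectivity. -/
def StronglyConnected {V : Type*} (A : V → V → Prop) : Prop :=
  ∀ u v, Reach A u v

/-- Connectivity of the underlying undirected graph. -/
def ConnectedD {V : Type*} (A : V → V → Prop) : Prop :=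
  ∀ u v : V, Reach (fun a b => A a b ∨ A b a) u v

/-- A strong component: an equivalence class of mutual reachability. -/
def IsStrongComponent {V : Type*} (A : V → V → Prop) (C : Set V) : Prop :=
  ∃ v, C = {u | Reach A u v ∧ Reach A v u}

/-- A sink strong component: a strong component with no arc leaving it. -/
def IsSinkComponent {V : Type*} (A : V → V → Prop) (C : Set V) : Prop :=
  IsStrongComponent A C ∧ ∀ u ∈ C, ∀ w, w ∉ C → ¬ A u w

/-- A source strong component: a strong component with no arc entering it. -/
def IsSourceComponent {V : Type*} (A : V → V → Prop) (C : Set V) : Prop :=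
  IsStrongComponent A C ∧ ∀ u ∈ C, ∀ w, w ∉ C → ¬ A w u

/-- The out-section of `u`: all vertices reachable from `u`. -/
def outSection {V : Type*} (A : V → V → Prop) (u : V) : Set V :=
  {w | Reach A u w}

/-- The in-section of `u`: all vertices from which `u` is reachable. -/
def inSection {V : Type*} (A : V → V → Prop) (u : V) : Set V :=
  {w | Reach A w u}

/-- A tournament: an oriented graph where every two distinct vertices are adjacent. -/
def IsTournament {V : Type*} (A : V → V → Prop) : Prop :=
  (∀ u v, A u v → ¬ A v u) ∧ ∀ u v : V, u ≠ v → A u v ∨ A v u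

/-- The number of arcs of the digraph given by `A`. -/
noncomputable def arcCount {V : Type*} (A : V → V → Prop) : ℕ :=
  Nat.card {p : V × V // A p.1 p.2}

/-!
Since every internal vertex of `P` has exactly one in- and one out-neighbour, a walk that starts
and ends outside `W` and visits some `w ∈ W` is forced forwards and backwards along `P`, so it
contains `P` as a segment. Splicing a shorter `(u,v)`-walk into that segment shortens the walk;
hence no geodesic between vertices outside `W` meets `W`, the complement of `W` is convex, and a
set avoiding `W` has its hull inside that complement.
-/

namespace List

variable {α : Type*} {R : α → α → Prop}

theorem IsChain.splice {t₁ p q t₂ : List α} (hl : (t₁ ++ p ++ t₂).IsChain R) (hq : q.IsChain R)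
    (hhead : q.head? = p.head?) (hlast : q.getLast? = p.getLast?) :
    (t₁ ++ q ++ t₂).IsChain R := by
  obtain ⟨h₁, hp₂, hj₁⟩ := isChain_append.mp (append_assoc t₁ p t₂ ▸ hl)
  obtain ⟨-, h₂, hj₂⟩ := isChain_append.mp hp₂
  rw [append_assoc]
  refine h₁.append (hq.append h₂ fun x hx y hy => hj₂ x (hlast ▸ hx) y hy) fun x hx y hy => ?_
  exact hj₁ x hx y (by rwa [head?_append, ← hhead, ← head?_append])

end List

section Walks

variable {V : Type*} {A : V → V → Prop}

theorem DiWalk.splice {a b x y : V} {t₁ p q t₂ : List V} (hl : DiWalk A a b (t₁ ++ p ++ t₂))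
    (hp : DiWalk A x y p) (hq : DiWalk A x y q) : DiWalk A a b (t₁ ++ q ++ t₂) := by
  obtain ⟨hla, hlb, hl⟩ := hl
  have hhead : q.head? = p.head? := hq.1.trans hp.1.symm
  have hlast : q.getLast? = p.getLast? := hq.2.1.trans hp.2.1.symm
  refine ⟨?_, ?_, hl.splice hq.2.2 hhead hlast⟩
  · rwa [List.head?_append, List.head?_append, hhead, ← List.head?_append, ← List.head?_append]
  · rwa [List.getLast?_append, List.getLast?_append, hlast, ← List.getLast?_append,
      ← List.getLast?_append]

theorem IsGeodesic.not_infix {a b x y : V} {l p q : List V} (hl : IsGeodesic A a b l)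
    (hp : DiWalk A x y p) (hq : DiWalk A x y q) (hqp : q.length < p.length) : ¬ p <:+: l := by
  rintro ⟨t₁, t₂, rfl⟩
  have := hl.2 _ (hl.1.splice hp hq)
  simp only [List.length_append] at this
  omega

theorem prefix_of_existsUnique_succ {v b : V} :
    ∀ {ws l : List V}, (ws ++ [v]).IsChain A → (∀ w ∈ ws, ∃! y, A w y) → l.IsChain A →
      l.head? = (ws ++ [v]).head? → l.getLast? = some b → b ∉ ws → ws ++ [v] <+: l
  | [], l, _, _, _, hhead, _, _ => by
    obtain ⟨t, rfl⟩ : ∃ t, l = v :: t := List.head?_eq_some_iff.mp hhead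
    exact List.prefix_append [v] t
  | w :: ws, l, hP, hsucc, hl, hhead, hlast, hb => by
    obtain ⟨l', rfl⟩ : ∃ l', l = w :: l' := List.head?_eq_some_iff.mp hhead
    obtain ⟨z, t, hzt⟩ := List.exists_cons_of_ne_nil (by simp : ws ++ [v] ≠ [])
    rw [List.cons_append, hzt, List.isChain_cons_cons] at hP
    cases l' with
    | nil => exact absurd (List.mem_cons_self ..) (Option.some_injective _ hlast ▸ hb)
    | cons y l'' =>
      rw [List.isChain_cons_cons] at hl
      obtain ⟨c, -, hc⟩ := hsucc w List.mem_cons_self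
      have hyz : y = z := (hc y hl.1).trans (hc z hP.1).symm
      rw [List.cons_append, List.cons_prefix_cons]
      refine ⟨rfl, prefix_of_existsUnique_succ (hzt ▸ hP.2)
        (fun x hx => hsucc x (List.mem_cons_of_mem w hx)) hl.2 (by rw [hzt, hyz]; rfl)
        (by rwa [List.getLast?_cons_cons] at hlast) (fun h => hb (List.mem_cons_of_mem w h))⟩

theorem suffix_of_existsUnique_pred {u a : V} {ws l : List V} (hP : (u :: ws).IsChain A)
    (hpred : ∀ w ∈ ws, ∃! x, A x w) (hl : l.IsChain A) (hlast : l.getLast? = (u :: ws).getLast?)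
    (hhead : l.head? = some a) (ha : a ∉ ws) : u :: ws <:+ l := by
  have hrev := prefix_of_existsUnique_succ (A := fun x y => A y x) (v := u) (ws := ws.reverse)
    (l := l.reverse) (by simpa [← List.reverse_cons] using List.isChain_reverse.mpr hP)
    (fun w hw => hpred w (List.mem_reverse.mp hw)) (List.isChain_reverse.mpr hl)
    (by rw [List.head?_reverse, hlast, ← List.reverse_cons, List.head?_reverse])
    (by rwa [List.getLast?_reverse])
    (mt List.mem_reverse.mp ha)
  simpa [← List.reverse_cons] using hrev

theorem infix_of_mem_of_existsUnique {u v a b w : V} {ws l : List V}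
    (hP : (u :: (ws ++ [v])).IsChain A) (hdeg : ∀ w ∈ ws, (∃! x, A x w) ∧ (∃! y, A w y))
    (hl : DiWalk A a b l) (ha : a ∉ ws) (hb : b ∉ ws) (hw : w ∈ ws) (hwl : w ∈ l) :
    u :: (ws ++ [v]) <:+: l := by
  obtain ⟨ws₁, ws₂, rfl⟩ := List.append_of_mem hw
  obtain ⟨l₁, l₂, rfl⟩ := List.append_of_mem hwl
  obtain ⟨hla, hlb, hl⟩ := hl
  have hP' : (u :: ws₁ ++ [w] ++ (ws₂ ++ [v])).IsChain A := by simpa using hP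
  have hl' : (l₁ ++ [w] ++ l₂).IsChain A := by rw [← List.append_cons]; exact hl
  obtain ⟨t₂, h₂⟩ := prefix_of_existsUnique_succ (ws := w :: ws₂) (l := w :: l₂) (v := v) (b := b)
    (hP'.suffix ⟨u :: ws₁, by simp⟩) (fun x hx => (hdeg x (by simp at hx ⊢; tauto)).2)
    (hl'.suffix ⟨l₁, by simp⟩) rfl
    (by rwa [List.getLast?_append_of_ne_nil _ (List.cons_ne_nil w l₂)] at hlb)
    (fun h => hb (by simp_all))
  obtain ⟨t₁, h₁⟩ := suffix_of_existsUnique_pred (u := u) (ws := ws₁ ++ [w]) (l := l₁ ++ [w])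
    (a := a) (hP'.prefix ⟨ws₂ ++ [v], by simp⟩) (fun x hx => (hdeg x (by simp at hx ⊢; tauto)).1)
    (hl'.prefix ⟨l₂, by simp⟩)
    (by rw [List.getLast?_concat, ← List.cons_append, List.getLast?_concat])
    (by rw [List.head?_append] at hla ⊢; exact hla) (fun h => ha (by simp_all))
  have hl₁ : l₁ = t₁ ++ u :: ws₁ := List.append_cancel_right (h₁.symm.trans (by simp))
  have hl₂ : l₂ = ws₂ ++ v :: t₂ := by simpa using h₂.symm
  exact ⟨t₁, t₂, by simp [hl₁, hl₂]⟩

theorem DiWalk.exists_shorter_of_not_isGeodesic {u v : V} {p : List V} (hp : DiWalk A u v p)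
    (hnot : ¬ IsGeodesic A u v p) : ∃ q, DiWalk A u v q ∧ q.length < p.length := by
  simpa [IsGeodesic, hp] using hnot

theorem IsGeodesic.not_mem_of_existsUnique {u v a b w : V} {ws l : List V}
    (hP : DiWalk A u v (u :: (ws ++ [v]))) (hnot : ¬ IsGeodesic A u v (u :: (ws ++ [v])))
    (hdeg : ∀ w ∈ ws, (∃! x, A x w) ∧ (∃! y, A w y)) (hl : IsGeodesic A a b l) (ha : a ∉ ws)
    (hb : b ∉ ws) (hw : w ∈ ws) : w ∉ l := fun hwl =>
  have ⟨_, hq, hlt⟩ := hP.exists_shorter_of_not_isGeodesic hnot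
  hl.not_infix hP hq hlt (infix_of_mem_of_existsUnique hP.2.2 hdeg hl.1 ha hb hw hwl)

theorem isConvexSet_geoInterval_of_forall_isGeodesic {C : Set V}
    (hC : ∀ a ∈ C, ∀ b ∈ C, ∀ l, IsGeodesic A a b l → ∀ x ∈ l, x ∈ C) :
    IsConvexSet (geoInterval A) C := by
  rintro a ha b hb x ((rfl | rfl) | ⟨l, hl, hx⟩ | ⟨l, hl, hx⟩)
  exacts [ha, hb, hC a ha b hb l hl x hx, hC b hb a ha l hl x hx]

end Walks

theorem IsHullSet.eq_univ_of_subset {V : Type*} {I : V → V → Set V} {S C : Set V}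
    (hS : IsHullSet I S) (hC : IsConvexSet I C) (hSC : S ⊆ C) : C = Set.univ :=
  Set.eq_univ_of_univ_subset (hS ▸ Set.sInter_subset_of_mem ⟨hC, hSC⟩)

theorem stmt_6_general {V : Type*} (A : V → V → Prop)
    (u v : V) (ws : List V) (hq : ws ≠ [])
    (hwalk : DiWalk A u v (u :: (ws ++ [v])))
    (hnotshort : ¬ IsGeodesic A u v (u :: (ws ++ [v])))
    (hdeg : ∀ w ∈ ws, (∃! x, A x w) ∧ (∃! y, A w y)) :
    (∀ S : Set V, IsHullSet (geoInterval A) S → ∃ w ∈ ws, w ∈ S) ∧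
    IsConvexSet (geoInterval A) {x | x ∉ ws} := by
  have hconv : IsConvexSet (geoInterval A) {x | x ∉ ws} :=
    isConvexSet_geoInterval_of_forall_isGeodesic fun a ha b hb l hl x hx hxws =>
      hl.not_mem_of_existsUnique hwalk hnotshort hdeg ha hb hxws hx
  refine ⟨fun S hS => ?_, hconv⟩
  by_contra! hSws
  obtain ⟨w, hw⟩ := List.exists_mem_of_ne_nil ws hq
  have hcompl := hS.eq_univ_of_subset hconv fun x hxS hxws => hSws x hxws hxS
  exact Set.eq_univ_iff_forall.mp hcompl w hw

/-- If `P = (u, w_1, …, w_q, v)` (`q ≥ 1`) is a directed `(u,v)`-path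
that is not a shortest directed `(u,v)`-path and every internal vertex has
in-degree 1 and out-degree 1, then every geodetic hull set contains an internal
vertex of `P`; in particular, the set of internal vertices is coconvex. -/
theorem stmt_6 {V : Type*} [Finite V] (A : V → V → Prop) (hA : IsOriented A)
    (u v : V) (ws : List V) (hq : ws ≠ [])
    (hwalk : DiWalk A u v (u :: (ws ++ [v])))
    (hnodup : (u :: (ws ++ [v])).Nodup)
    (hnotshort : ¬ IsGeodesic A u v (u :: (ws ++ [v])))
    (hdeg : ∀ w ∈ ws, (∃! x, A x w) ∧ (∃! y, A w y)) :
    (∀ S : Set V, IsHullSet (geoInterval A) S → ∃ w ∈ ws, w ∈ S) ∧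
    IsConvexSet (geoInterval A) {x | x ∉ ws} :=
  stmt_6_general A u v ws hq hwalk hnotshort hdeg
end

section
/- Let T be a tournament with exactly ℓ non-trivial strong components (strong components with more than one vertex), and let Ext(T) denote the set of extreme vertices of T (vertices that are sources, sinks, or transitive). Then hn_{P3*}(T) = hn_g(T) = |Ext(T)| + 2ℓ. -/
/-!
Extreme vertices of a tournament are exactly its trivial strong components. They are never
interior to a geodesic, so every geodetic hull set contains them; and since an interior
vertex of a geodesic lies in the strong component of both of its ends, a geodetic hull set
also meets every non-trivial strong component in at least two vertices.

Conversely, two vertices of a strong tournament generate it under P3*. Take a maximal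
strongly connected set `K` inside the P3*-hull of some pair. A vertex outside `K` with both
an in- and an out-neighbour in `K` lies in a P3*-interval of two vertices of `K`, so every
other vertex dominates `K` or is dominated by it; an arc from a dominated `l` to a dominating
`w` then makes `K ∪ {w, l}` strongly connected and contained in the hull of `{w, l}`.
Since P3*-intervals of a tournament lie in geodetic ones, both hull numbers equal
`|Ext(T)| + 2ℓ`.
-/

open Relation

section Walks

variable {V : Type*} {A : V → V → Prop} {u v x : V} {l : List V}

theorem reach_iff_reflTransGen : Reach A u v ↔ ReflTransGen A u v := by
  constructor
  · rintro ⟨l, hu, hv, hl⟩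
    have hne : l ≠ [] := by rintro rfl; simp at hu
    rw [List.head?_eq_some_head hne, Option.some_inj] at hu
    rw [List.getLast?_eq_some_getLast hne, Option.some_inj] at hv
    exact hu ▸ hv ▸ List.relationReflTransGen_of_exists_isChain l hl hne
  · intro h
    obtain ⟨l, hl, hv⟩ := List.exists_isChain_cons_of_relationReflTransGen h
    exact ⟨u :: l, rfl, by rw [List.getLast?_eq_some_getLast (List.cons_ne_nil _ _), hv], hl⟩

theorem DiWalk.reflTransGen_of_mem (h : DiWalk A u v l) (hx : x ∈ l) :
    ReflTransGen A u x ∧ ReflTransGen A x v := by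
  obtain ⟨hu, hv, hl : l.IsChain A⟩ := h
  have hne : l ≠ [] := by rintro rfl; simp at hu
  rw [List.head?_eq_some_head hne, Option.some_inj] at hu
  rw [List.getLast?_eq_some_getLast hne, Option.some_inj] at hv
  exact ⟨hl.induction (ReflTransGen A u ·) _ (fun _ _ h hu => hu.tail h)
      (fun _ => hu ▸ .refl) x hx,
    hl.backwards_induction (ReflTransGen A · v) _ (fun _ _ h hv => hv.head h)
      (fun _ => hv ▸ .refl) x hx⟩

theorem DiWalk.exists_eq_append_of_mem (h : DiWalk A u v l) (hx : x ∈ l) (hxu : x ≠ u)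
    (hxv : x ≠ v) : ∃ l₁ p s l₂, l = l₁ ++ p :: x :: s :: l₂ := by
  obtain ⟨hu, hv, -⟩ := h
  obtain ⟨t₁, t₂, rfl⟩ := List.append_of_mem hx
  obtain rfl | ⟨l₁, p, rfl⟩ := t₁.eq_nil_or_concat
  · simp_all
  obtain _ | ⟨s, l₂⟩ := t₂
  · simp_all
  · exact ⟨l₁, p, s, l₂, by simp⟩

theorem DiWalk.shortcut {l₁ l₂ : List V} {p s : V}
    (h : DiWalk A u v (l₁ ++ p :: x :: s :: l₂)) (hps : A p s) :
    DiWalk A u v (l₁ ++ p :: s :: l₂) := by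
  obtain ⟨hu, hv, hl : List.IsChain A _⟩ := h
  refine ⟨by simpa [List.head?_append] using hu, by simpa [List.getLast?_append] using hv, ?_⟩
  show List.IsChain A _
  rw [List.isChain_split, List.isChain_cons_cons] at hl ⊢
  rw [List.isChain_cons_cons] at hl
  exact ⟨hl.1, hps, hl.2.2.2⟩

end Walks

section Geodesics

variable {V : Type*} {A : V → V → Prop} {u v w x : V} {l : List V}

theorem IsGeodesic.exists_not_adj_of_mem (hg : IsGeodesic A u v l) (hx : x ∈ l) (hxu : x ≠ u)
    (hxv : x ≠ v) : ∃ p s, A p x ∧ A x s ∧ ¬ A p s := by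
  obtain ⟨l₁, p, s, l₂, rfl⟩ := hg.1.exists_eq_append_of_mem hx hxu hxv
  have hl : List.IsChain A (l₁ ++ p :: x :: s :: l₂) := hg.1.2.2
  rw [List.isChain_split, List.isChain_cons_cons, List.isChain_cons_cons] at hl
  refine ⟨p, s, hl.2.1, hl.2.2.1, fun hps => ?_⟩
  have := hg.2 _ (hg.1.shortcut hps)
  simp at this

theorem IsGeodesic.not_adj_and_ne_of_mem (hg : IsGeodesic A u v l) (hx : x ∈ l) (hxu : x ≠ u)
    (hxv : x ≠ v) : ¬ A u v ∧ u ≠ v := by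
  obtain ⟨l₁, p, s, l₂, rfl⟩ := hg.1.exists_eq_append_of_mem hx hxu hxv
  refine ⟨fun huv => ?_, fun huv => ?_⟩
  · have := hg.2 [u, v] ⟨rfl, rfl, List.isChain_pair.mpr huv⟩
    simp at this
    omega
  · have := hg.2 [u] ⟨rfl, by simp [huv], List.isChain_singleton u⟩
    simp at this
    omega

theorem exists_isGeodesic_of_mem_geoInterval (hx : x ∈ geoInterval A u w) (hxu : x ≠ u)
    (hxw : x ≠ w) :
    (∃ l, IsGeodesic A u w l ∧ x ∈ l) ∨ (∃ l, IsGeodesic A w u l ∧ x ∈ l) := by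
  rcases hx with (rfl | rfl) | h
  exacts [(hxu rfl).elim, (hxw rfl).elim, h]

theorem IsTournament.isGeodesic_of_adj (hT : IsTournament A) (huw : A u w) (hwv : A w v)
    (huv : ¬ A u v) : IsGeodesic A u v [u, w, v] := by
  refine ⟨⟨rfl, rfl, List.isChain_cons_cons.mpr ⟨huw, List.isChain_pair.mpr hwv⟩⟩, ?_⟩
  rintro (_ | ⟨a, _ | ⟨b, _ | ⟨c, t⟩⟩⟩) ⟨hu, hv, hl⟩ <;> simp at hu hv ⊢
  · exact hT.1 _ _ huw (hu ▸ hv ▸ hwv)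
  · exact huv (hu ▸ hv ▸ List.isChain_pair.mp hl)

theorem IsTournament.p3sInterval_subset_geoInterval (hT : IsTournament A) (u v : V) :
    p3sInterval A u v ⊆ geoInterval A u v := by
  rintro w (hw | ⟨huw, hwv, huv⟩ | ⟨hvw, hwu, hvu⟩)
  · exact Or.inl hw
  · exact Or.inr (Or.inl ⟨_, hT.isGeodesic_of_adj huw hwv huv, by simp⟩)
  · exact Or.inr (Or.inr ⟨_, hT.isGeodesic_of_adj hvw hwu hvu, by simp⟩)

end Geodesics

section Components

variable {V : Type*} {A : V → V → Prop} {C D : Set V} {u v w x : V} {l : List V}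

def strongComponent (A : V → V → Prop) (v : V) : Set V :=
  {u | ReflTransGen A u v ∧ ReflTransGen A v u}

theorem mem_strongComponent_self (A : V → V → Prop) (v : V) : v ∈ strongComponent A v :=
  ⟨.refl, .refl⟩

theorem strongComponent_eq_of_mem (h : u ∈ strongComponent A v) :
    strongComponent A u = strongComponent A v := by
  ext w
  exact ⟨fun hw => ⟨hw.1.trans h.1, h.2.trans hw.2⟩,
    fun hw => ⟨hw.1.trans h.2, h.1.trans hw.2⟩⟩

theorem isStrongComponent_iff : IsStrongComponent A C ↔ ∃ v, C = strongComponent A v := by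
  simp only [IsStrongComponent, strongComponent, reach_iff_reflTransGen]

theorem IsStrongComponent.eq_strongComponent (hC : IsStrongComponent A C) (hu : u ∈ C) :
    C = strongComponent A u := by
  obtain ⟨v, rfl⟩ := isStrongComponent_iff.mp hC
  exact (strongComponent_eq_of_mem hu).symm

theorem IsStrongComponent.disjoint (hC : IsStrongComponent A C) (hD : IsStrongComponent A D)
    (hCD : C ≠ D) : Disjoint C D :=
  Set.disjoint_left.mpr fun _ huC huD =>
    hCD ((hC.eq_strongComponent huC).trans (hD.eq_strongComponent huD).symm)

theorem IsTournament.mem_strongComponent_of_isGeodesic (hT : IsTournament A)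
    (hg : IsGeodesic A u v l) (hx : x ∈ l) (hxu : x ≠ u) (hxv : x ≠ v) :
    u ∈ strongComponent A x ∧ v ∈ strongComponent A x ∧ u ≠ v := by
  obtain ⟨hux, hxv'⟩ := hg.1.reflTransGen_of_mem hx
  obtain ⟨huv, hne⟩ := hg.not_adj_and_ne_of_mem hx hxu hxv
  have hvu : ReflTransGen A v u := .single ((hT.2 u v hne).resolve_left huv)
  exact ⟨⟨hux, hxv'.trans hvu⟩, ⟨hvu.trans hux, hxv'⟩, hne⟩

theorem IsTournament.mem_strongComponent_of_mem_geoInterval (hT : IsTournament A)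
    (hx : x ∈ geoInterval A u w) (hxu : x ≠ u) (hxw : x ≠ w) :
    u ∈ strongComponent A x ∧ w ∈ strongComponent A x ∧ u ≠ w := by
  rcases exists_isGeodesic_of_mem_geoInterval hx hxu hxw with ⟨l, hg, hl⟩ | ⟨l, hg, hl⟩
  · exact hT.mem_strongComponent_of_isGeodesic hg hl hxu hxw
  · obtain ⟨hw, hu, hne⟩ := hT.mem_strongComponent_of_isGeodesic hg hl hxw hxu
    exact ⟨hu, hw, hne.symm⟩

end Components

section Extreme

variable {V : Type*} {A : V → V → Prop} {u v w x : V}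

def IsExtremeVertex (A : V → V → Prop) (v : V) : Prop :=
  (∀ u, ¬ A u v) ∨ (∀ u, ¬ A v u) ∨ (∀ u w, A u v → A v w → A u w)

theorem not_isExtremeVertex_of_mem_geoInterval (hx : x ∈ geoInterval A u w) (hxu : x ≠ u)
    (hxw : x ≠ w) : ¬ IsExtremeVertex A x := by
  obtain ⟨p, s, hpx, hxs, hps⟩ : ∃ p s, A p x ∧ A x s ∧ ¬ A p s := by
    rcases exists_isGeodesic_of_mem_geoInterval hx hxu hxw with ⟨l, hg, hl⟩ | ⟨l, hg, hl⟩
    exacts [hg.exists_not_adj_of_mem hl hxu hxw, hg.exists_not_adj_of_mem hl hxw hxu]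
  rintro (h | h | h)
  exacts [h p hpx, h s hxs, hps (h p s hpx hxs)]

-- In particular, a transitive vertex lies on no cycle.
theorem IsTournament.adj_of_reflTransGen_of_transitive (hT : IsTournament A)
    (hv : ∀ u w, A u v → A v w → A u w) {a z : V} (hva : A v a) (h : ReflTransGen A a z) :
    A v z := by
  induction h with
  | refl => exact hva
  | @tail z z' _ hzz' ih =>
    have hne : z' ≠ v := by rintro rfl; exact hT.1 _ _ ih hzz'
    exact (hT.2 v z' hne.symm).resolve_right fun hz'v => hT.1 _ _ hzz' (hv z' z hz'v ih)

theorem IsTournament.isExtremeVertex_iff (hT : IsTournament A) :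
    IsExtremeVertex A v ↔ strongComponent A v = {v} := by
  refine ⟨fun hv => Set.eq_singleton_iff_unique_mem.mpr ⟨mem_strongComponent_self A v, ?_⟩,
    fun hv => Or.inr (Or.inr fun u w huv hvw => ?_)⟩
  · rintro u ⟨huv, hvu⟩
    rcases hv with hv | hv | hv
    · rcases huv.cases_tail with rfl | ⟨_, _, h⟩
      exacts [rfl, (hv _ h).elim]
    · rcases hvu.cases_head with rfl | ⟨_, h, _⟩
      exacts [rfl, (hv _ h).elim]
    · rcases hvu.cases_head with rfl | ⟨a, hva, hau⟩
      · rfl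
      · have hvv := hT.adj_of_reflTransGen_of_transitive hv hva (hau.trans huv)
        exact (hT.1 _ _ hvv hvv).elim
  · by_contra huw
    have hne : u ≠ w := by rintro rfl; exact hT.1 _ _ huv hvw
    have hw : w ∈ strongComponent A v :=
      ⟨.head ((hT.2 u w hne).resolve_left huw) (.single huv), .single hvw⟩
    rw [hv, Set.mem_singleton_iff] at hw
    exact hT.1 _ _ hvw (hw ▸ hvw)

end Extreme

section StronglyConnectedOn

variable {V : Type*} {A : V → V → Prop} {D K : Set V} {u v w x : V}

def InducedArc (A : V → V → Prop) (D : Set V) (u v : V) : Prop :=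
  u ∈ D ∧ v ∈ D ∧ A u v

def StronglyConnectedOn (A : V → V → Prop) (D : Set V) : Prop :=
  ∀ u ∈ D, ∀ v ∈ D, ReflTransGen (InducedArc A D) u v

theorem Relation.ReflTransGen.inducedArc_mono (hDK : D ⊆ K)
    (h : ReflTransGen (InducedArc A D) u v) : ReflTransGen (InducedArc A K) u v :=
  ReflTransGen.mono (fun _ _ ⟨ha, hb, hab⟩ => ⟨hDK ha, hDK hb, hab⟩) _ _ h

theorem stronglyConnectedOn_of_reflTransGen (r : V)
    (h : ∀ u ∈ D, ReflTransGen (InducedArc A D) u r ∧ ReflTransGen (InducedArc A D) r u) :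
    StronglyConnectedOn A D :=
  fun u hu v hv => (h u hu).1.trans (h v hv).2

theorem stronglyConnectedOn_singleton (A : V → V → Prop) (v : V) :
    StronglyConnectedOn A {v} := by
  rintro u rfl v rfl
  exact .refl

theorem stronglyConnectedOn_strongComponent (A : V → V → Prop) (v : V) :
    StronglyConnectedOn A (strongComponent A v) := by
  have hpath : ∀ u w, ReflTransGen A u w → u ∈ strongComponent A v →
      w ∈ strongComponent A v → ReflTransGen (InducedArc A (strongComponent A v)) u w := by
    intro u w h
    induction h using ReflTransGen.head_induction_on with
    | refl => exact fun _ _ => .refl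
    | head hac hcw ih =>
      intro hu hw
      have hc : _ ∈ strongComponent A v := ⟨hcw.trans hw.1, hu.2.tail hac⟩
      exact .head ⟨hu, hc, hac⟩ (ih hc hw)
  exact fun u hu w hw => hpath u w (hu.1.trans hw.2) hu hw

theorem Relation.ReflTransGen.exists_rel_notMem_mem {r : V → V → Prop} {P : Set V}
    (h : ReflTransGen r u v) (hu : u ∉ P) (hv : v ∈ P) :
    ∃ a b, r a b ∧ a ∉ P ∧ b ∈ P := by
  induction h using ReflTransGen.head_induction_on with
  | refl => exact (hu hv).elim
  | @head a c hac _ ih =>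
    by_cases hc : c ∈ P
    exacts [⟨a, c, hac, hu, hc⟩, ih hc]

theorem StronglyConnectedOn.exists_adj_into (hD : StronglyConnectedOn A D) {P : Set V}
    (hPD : P ⊆ D) (hu : u ∈ D) (huP : u ∉ P) (hv : v ∈ P) :
    ∃ a ∈ D, a ∉ P ∧ ∃ b ∈ P, A a b := by
  obtain ⟨a, b, ⟨ha, -, hab⟩, haP, hbP⟩ := (hD u hu v (hPD hv)).exists_rel_notMem_mem huP hv
  exact ⟨a, ha, haP, b, hbP, hab⟩

theorem StronglyConnectedOn.insert_of_adj (hK : StronglyConnectedOn A K) {k₁ k₂ : V}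
    (hk₁ : k₁ ∈ K) (hk₂ : k₂ ∈ K) (h₁ : A k₁ x) (h₂ : A x k₂) :
    StronglyConnectedOn A (insert x K) := by
  have hsub : K ⊆ insert x K := Set.subset_insert x K
  refine stronglyConnectedOn_of_reflTransGen k₁ ?_
  rintro u (rfl | hu)
  · exact ⟨.head ⟨Set.mem_insert u K, hsub hk₂, h₂⟩
      ((hK k₂ hk₂ k₁ hk₁).inducedArc_mono hsub),
      .single ⟨hsub hk₁, Set.mem_insert u K, h₁⟩⟩
  · exact ⟨(hK u hu k₁ hk₁).inducedArc_mono hsub,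
      (hK k₁ hk₁ u hu).inducedArc_mono hsub⟩

theorem StronglyConnectedOn.insert_insert_of_adj (hK : StronglyConnectedOn A K) {k l : V}
    (hk : k ∈ K) (hw : ∀ k ∈ K, A w k) (hl : ∀ k ∈ K, A k l) (hlw : A l w) :
    StronglyConnectedOn A (insert l (insert w K)) := by
  set K' := insert l (insert w K)
  have hsub : K ⊆ K' := (Set.subset_insert w K).trans (Set.subset_insert l _)
  have hl' : l ∈ K' := Set.mem_insert l _
  have hw' : w ∈ K' := Set.mem_insert_of_mem l (Set.mem_insert w K)
  have hwk : ReflTransGen (InducedArc A K') w k := .single ⟨hw', hsub hk, hw k hk⟩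
  have hkl : ReflTransGen (InducedArc A K') k l := .single ⟨hsub hk, hl', hl k hk⟩
  have hlw' : ReflTransGen (InducedArc A K') l w := .single ⟨hl', hw', hlw⟩
  refine stronglyConnectedOn_of_reflTransGen k ?_
  rintro u (rfl | rfl | hu)
  · exact ⟨hlw'.trans hwk, hkl⟩
  · exact ⟨hwk, hkl.trans hlw'⟩
  · exact ⟨(hK u hu k hk).inducedArc_mono hsub, (hK k hk u hu).inducedArc_mono hsub⟩

end StronglyConnectedOn

section Hull

variable {V : Type*} {I J : V → V → Set V} {S T D : Set V}

theorem subset_convexHullD (I : V → V → Set V) (S : Set V) : S ⊆ convexHullD I S :=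
  fun _ hx => Set.mem_sInter.mpr fun _ hC => hC.2 hx

theorem isConvexSet_convexHullD (I : V → V → Set V) (S : Set V) :
    IsConvexSet I (convexHullD I S) :=
  fun _ hu _ hv _ hw => Set.mem_sInter.mpr fun C hC =>
    hC.1 _ (Set.mem_sInter.mp hu C hC) _ (Set.mem_sInter.mp hv C hC) hw

theorem convexHullD_subset (hD : IsConvexSet I D) (hSD : S ⊆ D) : convexHullD I S ⊆ D :=
  fun _ hx => Set.mem_sInter.mp hx D ⟨hD, hSD⟩

theorem convexHullD_mono (hST : S ⊆ T) : convexHullD I S ⊆ convexHullD I T :=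
  convexHullD_subset (isConvexSet_convexHullD I T) (hST.trans (subset_convexHullD I T))

theorem convexHullD_mono_interval (hIJ : ∀ u v, I u v ⊆ J u v) :
    convexHullD I S ⊆ convexHullD J S :=
  convexHullD_subset (fun u hu v hv => (hIJ u v).trans (isConvexSet_convexHullD J S u hu v hv))
    (subset_convexHullD J S)

theorem IsHullSet.mono_interval (hIJ : ∀ u v, I u v ⊆ J u v) (hS : IsHullSet I S) :
    IsHullSet J S :=
  Set.eq_univ_of_univ_subset (hS ▸ convexHullD_mono_interval hIJ)

theorem IsHullSet.eq_univ_of_isConvexSet (hS : IsHullSet I S) (hD : IsConvexSet I D)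
    (hSD : S ⊆ D) : D = Set.univ :=
  Set.eq_univ_of_univ_subset (hS ▸ convexHullD_subset hD hSD)

theorem hullNumber_eq {n : ℕ}
    (hle : ∃ S, IsHullSet I S ∧ S.ncard ≤ n) (hge : ∀ S, IsHullSet I S → n ≤ S.ncard) :
    hullNumber I = n := by
  obtain ⟨S, hS, hSn⟩ := hle
  have hmem : S.ncard ∈ {k | ∃ S, IsHullSet I S ∧ S.ncard = k} := ⟨S, hS, rfl⟩
  exact le_antisymm ((Nat.sInf_le hmem).trans hSn)
    (le_csInf ⟨_, hmem⟩ fun _ ⟨T, hT, hTk⟩ => hTk ▸ hge T hT)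

end Hull

section PairHull

variable {V : Type*} {A : V → V → Prop} {D H K : Set V} {x : V}

theorem IsTournament.mem_of_adj_of_stronglyConnectedOn (hT : IsTournament A)
    (hK : StronglyConnectedOn A K) (hH : IsConvexSet (p3sInterval A) H) (hKH : K ⊆ H)
    {k₁ k₂ : V} (hk₁ : k₁ ∈ K) (hk₂ : k₂ ∈ K) (h₁ : A k₁ x) (h₂ : A x k₂) :
    x ∈ H := by
  -- an arc from an out-neighbour `q` of `x` in `K` back to an in-neighbour `p` puts `x` into
  -- the P3*-interval of `p` and `q`
  obtain ⟨q, hqK, hqP, p, ⟨hpK, hpx⟩, hqp⟩ := hK.exists_adj_into (P := {k ∈ K | A k x})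
    (fun _ h => h.1) hk₂ (fun h => hT.1 _ _ h₂ h.2) ⟨hk₁, h₁⟩
  have hxq : A x q := (hT.2 x q (by rintro rfl; exact hT.1 _ _ hqp hpx)).resolve_right
    fun h => hqP ⟨hqK, h⟩
  exact hH p (hKH hpK) q (hKH hqK) (Or.inr (Or.inl ⟨hpx, hxq, hT.1 _ _ hqp⟩))

theorem IsTournament.exists_adj_dominated_dominating (hT : IsTournament A)
    (hD : StronglyConnectedOn A D) (hKD : K ⊆ D) {k : V} (hk : k ∈ K) (hxD : x ∈ D)
    (hxK : x ∉ K) (hsplit : ∀ y ∈ D, y ∉ K → (∀ k ∈ K, A y k) ∨ (∀ k ∈ K, A k y)) :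
    ∃ w ∈ D, w ∉ K ∧ (∀ k ∈ K, A w k) ∧ ∃ l ∈ D, (∀ k ∈ K, A k l) ∧ A l w := by
  set Dom := {y ∈ D | y ∉ K ∧ ∀ k ∈ K, A y k}
  obtain ⟨w₀, hw₀D, hw₀K, k₀, hk₀, hw₀k₀⟩ := hD.exists_adj_into hKD hxD hxK hk
  have hw₀ : w₀ ∈ Dom := ⟨hw₀D, hw₀K, (hsplit w₀ hw₀D hw₀K).resolve_right
    fun h => hT.1 _ _ hw₀k₀ (h k₀ hk₀)⟩
  obtain ⟨l, hlD, hlDom, w, ⟨hwD, hwK, hwdom⟩, hlw⟩ :=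
    hD.exists_adj_into (P := Dom) (fun _ h => h.1) (hKD hk) (fun h => h.2.1 hk) hw₀
  have hlK : l ∉ K := fun hlK => hT.1 _ _ hlw (hwdom l hlK)
  exact ⟨w, hwD, hwK, hwdom, l, hlD,
    (hsplit l hlD hlK).resolve_left fun h => hlDom ⟨hlD, hlK, h⟩, hlw⟩

theorem IsTournament.exists_subset_convexHullD_pair [Finite V] (hT : IsTournament A)
    (hD : StronglyConnectedOn A D) (hne : D.Nonempty) :
    ∃ a b, D ⊆ convexHullD (p3sInterval A) {a, b} := by
  set 𝒮 := {K | K.Nonempty ∧ K ⊆ D ∧ StronglyConnectedOn A K ∧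
    ∃ a b, K ⊆ convexHullD (p3sInterval A) {a, b}}
  obtain ⟨d, hd⟩ := hne
  obtain ⟨K, ⟨⟨k, hk⟩, hKD, hK, a, b, hKab⟩, hmax⟩ :=
    Set.Finite.exists_maximalFor Set.ncard 𝒮 (Set.toFinite _)
      ⟨{d}, Set.singleton_nonempty d, Set.singleton_subset_iff.mpr hd,
        stronglyConnectedOn_singleton A d, d, d, (subset_convexHullD _ _).trans' (by simp)⟩
  have hbig : ∀ K' ∈ 𝒮, ¬ K ⊂ K' := fun K' hK' hlt =>
    (hmax hK' (Set.ncard_le_ncard hlt.le)).not_gt (Set.ncard_lt_ncard hlt)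
  refine ⟨a, b, fun x hxD => ?_⟩
  by_contra hxK
  replace hxK : x ∉ K := fun h => hxK (hKab h)
  have hsplit : ∀ y ∈ D, y ∉ K → (∀ k ∈ K, A y k) ∨ (∀ k ∈ K, A k y) := by
    intro y hyD hyK
    by_contra! h
    obtain ⟨⟨k₁, hk₁, hyk₁⟩, k₂, hk₂, hk₂y⟩ := h
    have hne : ∀ k ∈ K, y ≠ k := fun k hk h => hyK (h ▸ hk)
    have h₁ : A k₁ y := (hT.2 _ _ (hne k₁ hk₁)).resolve_left hyk₁
    have h₂ : A y k₂ := (hT.2 _ _ (hne k₂ hk₂)).resolve_right hk₂y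
    have hyH : y ∈ convexHullD (p3sInterval A) {a, b} := hT.mem_of_adj_of_stronglyConnectedOn
      hK (isConvexSet_convexHullD _ _) hKab hk₁ hk₂ h₁ h₂
    exact hbig (insert y K) ⟨Set.insert_nonempty y K, Set.insert_subset hyD hKD,
      hK.insert_of_adj hk₁ hk₂ h₁ h₂, a, b, Set.insert_subset hyH hKab⟩
      (Set.ssubset_insert hyK)
  obtain ⟨w, hwD, hwK, hwdom, l, hlD, hldom, hlw⟩ :=
    hT.exists_adj_dominated_dominating hD hKD hk hxD hxK hsplit
  set H := convexHullD (p3sInterval A) {w, l}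
  have hwH : w ∈ H := subset_convexHullD _ _ (by simp)
  have hlH : l ∈ H := subset_convexHullD _ _ (by simp)
  have hKH : K ⊆ H := fun k hk => isConvexSet_convexHullD _ _ w hwH l hlH
    (Or.inr (Or.inl ⟨hwdom k hk, hldom k hk, hT.1 _ _ hlw⟩))
  refine hbig (insert l (insert w K)) ⟨Set.insert_nonempty _ _,
    Set.insert_subset hlD (Set.insert_subset hwD hKD), hK.insert_insert_of_adj hk hwdom hldom hlw,
    w, l, Set.insert_subset hlH (Set.insert_subset hwH hKH)⟩ ?_
  exact (Set.ssubset_insert hwK).trans_subset (Set.subset_insert _ _)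

end PairHull

section Counting

variable {α ι : Type*}

theorem ncard_add_two_mul_le [Finite α] {S E : Set α} {𝒞 : Set (Set α)} (hES : E ⊆ S)
    (h𝒞 : 𝒞.PairwiseDisjoint id) (hE : ∀ C ∈ 𝒞, Disjoint E C)
    (h2 : ∀ C ∈ 𝒞, 2 ≤ (S ∩ C).ncard) : E.ncard + 2 * 𝒞.ncard ≤ S.ncard := by
  have h𝒞f : 𝒞.Finite := Set.toFinite 𝒞
  have hU : (⋃ C ∈ 𝒞, S ∩ C).ncard = ∑ᶠ C ∈ 𝒞, (S ∩ C).ncard :=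
    h𝒞f.ncard_biUnion (fun _ _ => Set.toFinite _)
      (h𝒞.mono_on fun _ _ => Set.inter_subset_right)
  have hsum : 2 * 𝒞.ncard ≤ (⋃ C ∈ 𝒞, S ∩ C).ncard := by
    rw [hU, finsum_mem_eq_finite_toFinset_sum _ h𝒞f, Set.ncard_eq_toFinset_card 𝒞 h𝒞f,
      mul_comm]
    exact Finset.card_nsmul_le_sum _ _ 2 fun C hC => h2 C (h𝒞f.mem_toFinset.mp hC)
  have hdisj : Disjoint E (⋃ C ∈ 𝒞, S ∩ C) :=
    Set.disjoint_iUnion₂_right.mpr fun C hC => (hE C hC).mono_right Set.inter_subset_right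
  calc E.ncard + 2 * 𝒞.ncard ≤ (E ∪ ⋃ C ∈ 𝒞, S ∩ C).ncard := by
        rw [Set.ncard_union_eq hdisj]; omega
    _ ≤ S.ncard := Set.ncard_le_ncard (Set.union_subset hES (Set.iUnion₂_subset fun _ _ =>
        Set.inter_subset_left))

theorem ncard_union_biUnion_le (E : Set α) {𝒞 : Set ι} (h𝒞 : 𝒞.Finite)
    (f : ι → Set α) (hf : ∀ C ∈ 𝒞, (f C).ncard ≤ 2) :
    (E ∪ ⋃ C ∈ 𝒞, f C).ncard ≤ E.ncard + 2 * 𝒞.ncard := by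
  have hsum : (⋃ C ∈ 𝒞, f C).ncard ≤ 2 * 𝒞.ncard := by
    refine (h𝒞.ncard_biUnion_le f).trans ?_
    rw [finsum_mem_eq_finite_toFinset_sum _ h𝒞, Set.ncard_eq_toFinset_card 𝒞 h𝒞, mul_comm]
    exact Finset.sum_le_card_nsmul _ _ 2 fun C hC => hf C (h𝒞.mem_toFinset.mp hC)
  exact (Set.ncard_union_le _ _).trans (by omega)

end Counting

section Main

variable {V : Type*} {A : V → V → Prop} {C S : Set V} {v : V}

theorem IsTournament.isExtremeVertex_iff_ncard_le_one [Finite V] (hT : IsTournament A) :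
    IsExtremeVertex A v ↔ (strongComponent A v).ncard ≤ 1 := by
  rw [hT.isExtremeVertex_iff, Set.ncard_le_one_iff_eq]
  refine ⟨fun h => Or.inr ⟨v, h⟩, ?_⟩
  rintro (h | ⟨a, h⟩)
  · exact absurd (h ▸ mem_strongComponent_self A v) (Set.notMem_empty v)
  · have hva : v = a := by simpa [h] using mem_strongComponent_self A v
    rw [h, hva]

theorem isConvexSet_compl_singleton_of_isExtremeVertex (hv : IsExtremeVertex A v) :
    IsConvexSet (geoInterval A) {v}ᶜ := by
  rintro u hu w hw x hx rfl
  exact not_isExtremeVertex_of_mem_geoInterval hx (Ne.symm hu) (Ne.symm hw) hv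

-- A geodesic with an interior vertex in `C` has two distinct ends in `C`.
theorem IsTournament.isConvexSet_compl_union (hT : IsTournament A) (hC : IsStrongComponent A C)
    (hS : (S ∩ C).Subsingleton) : IsConvexSet (geoInterval A) (Cᶜ ∪ S) := by
  intro u hu w hw x hx
  by_cases hxu : x = u
  · exact hxu ▸ hu
  by_cases hxw : x = w
  · exact hxw ▸ hw
  refine Or.inl fun hxC => ?_
  obtain ⟨huC, hwC, huw⟩ := hT.mem_strongComponent_of_mem_geoInterval hx hxu hxw
  rw [← hC.eq_strongComponent hxC] at huC hwC
  exact huw (hS ⟨hu.resolve_left (not_not.mpr huC), huC⟩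
    ⟨hw.resolve_left (not_not.mpr hwC), hwC⟩)

theorem IsTournament.ncard_le_of_isHullSet_geoInterval [Finite V] (hT : IsTournament A)
    (hS : IsHullSet (geoInterval A) S) :
    {v | IsExtremeVertex A v}.ncard + 2 * {C : Set V | IsStrongComponent A C ∧ 1 < C.ncard}.ncard
      ≤ S.ncard := by
  refine ncard_add_two_mul_le (fun v hv => ?_) (fun C hC D hD hCD => hC.1.disjoint hD.1 hCD)
    (fun C hC => Set.disjoint_left.mpr fun v hv hvC => ?_) (fun C hC => ?_)
  · by_contra hvS
    have := hS.eq_univ_of_isConvexSet (isConvexSet_compl_singleton_of_isExtremeVertex hv)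
      (Set.subset_compl_singleton_iff.mpr hvS)
    exact (this ▸ Set.mem_univ v : v ∈ ({v}ᶜ : Set V)) rfl
  · rw [hC.1.eq_strongComponent hvC] at hC
    exact absurd ((hT.isExtremeVertex_iff_ncard_le_one).mp hv) (not_le.mpr hC.2)
  · by_contra! h
    have hsub : (S ∩ C).Subsingleton := by
      rw [← Set.ncard_le_one_iff_subsingleton]; omega
    have := hS.eq_univ_of_isConvexSet (hT.isConvexSet_compl_union hC.1 hsub)
      Set.subset_union_right
    have hCS : C ⊆ S := fun c hc =>
      (this ▸ Set.mem_univ c : c ∈ Cᶜ ∪ S).resolve_left (not_not.mpr hc)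
    rw [Set.inter_eq_right.mpr hCS] at h
    exact absurd hC.2 (by omega)

theorem IsTournament.exists_isHullSet_p3sInterval [Finite V] (hT : IsTournament A) :
    ∃ S, IsHullSet (p3sInterval A) S ∧ S.ncard ≤ {v | IsExtremeVertex A v}.ncard +
      2 * {C : Set V | IsStrongComponent A C ∧ 1 < C.ncard}.ncard := by
  set 𝒞 := {C : Set V | IsStrongComponent A C ∧ 1 < C.ncard}
  have hpair : ∀ C ∈ 𝒞, ∃ P : Set V, P.ncard ≤ 2 ∧
      C ⊆ convexHullD (p3sInterval A) P := by
    rintro C ⟨hC, -⟩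
    obtain ⟨v, rfl⟩ := isStrongComponent_iff.mp hC
    obtain ⟨a, b, hab⟩ := hT.exists_subset_convexHullD_pair
      (stronglyConnectedOn_strongComponent A v) ⟨v, mem_strongComponent_self A v⟩
    exact ⟨{a, b}, (Set.ncard_insert_le _ _).trans (by rw [Set.ncard_singleton]), hab⟩
  choose! P hP2 hP using hpair
  refine ⟨{v | IsExtremeVertex A v} ∪ ⋃ C ∈ 𝒞, P C, Set.eq_univ_of_forall fun x => ?_,
    ncard_union_biUnion_le _ (Set.toFinite 𝒞) P hP2⟩
  · by_cases hx : IsExtremeVertex A x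
    · exact subset_convexHullD _ _ (Or.inl hx)
    have hC : strongComponent A x ∈ 𝒞 := ⟨isStrongComponent_iff.mpr ⟨x, rfl⟩,
      not_le.mp (mt hT.isExtremeVertex_iff_ncard_le_one.mpr hx)⟩
    refine convexHullD_mono ?_ (hP _ hC (mem_strongComponent_self A x))
    exact Set.subset_union_of_subset_right (Set.subset_biUnion_of_mem hC) _

end Main

/-- For a tournament `T` with exactly `ℓ` non-trivial strong
components and extreme-vertex set `Ext(T)`,
`hn_{P3*}(T) = hn_g(T) = |Ext(T)| + 2ℓ`. -/
theorem stmt_10 {V : Type*} [Finite V] (A : V → V → Prop) (hT : IsTournament A)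
    (Ext : Set V)
    (hExt : Ext = {v : V | (∀ u, ¬ A u v) ∨ (∀ u, ¬ A v u) ∨
                    (∀ u w, A u v → A v w → A u w)})
    (l : ℕ)
    (hl : l = {C : Set V | IsStrongComponent A C ∧ 1 < C.ncard}.ncard) :
    hullNumber (p3sInterval A) = Ext.ncard + 2 * l ∧
    hullNumber (geoInterval A) = Ext.ncard + 2 * l := by
  subst hExt hl
  obtain ⟨S, hS, hcard⟩ := hT.exists_isHullSet_p3sInterval
  have hgeo : ∀ {T}, IsHullSet (p3sInterval A) T → IsHullSet (geoInterval A) T :=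
    IsHullSet.mono_interval hT.p3sInterval_subset_geoInterval
  refine ⟨hullNumber_eq ?_ fun T hT' => hT.ncard_le_of_isHullSet_geoInterval (hgeo hT'),
    hullNumber_eq ?_ fun T => hT.ncard_le_of_isHullSet_geoInterval⟩
  exacts [⟨S, hS, hcard⟩, ⟨S, hgeo hS, hcard⟩]
end
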